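/- arXiv:2605.18509 — 3 statements merged into one kernel-verified Lean document; each statement's English description precedes it below -/
import Mathlib

section
/- Fix a context x. Assume Local Linearity holds at x (there exists φ_x ∈ ℝ^K with q(x,a) = ⟨I_a, φ_x⟩ for all a ∈ A). Let φ* ∈ ℝ^K be any vector satisfying Γ_{π0,x} φ* = θ_{π0,x}. Then q(x,a) = ⟨I_a, φ*⟩ for every a ∈ A with π0(a|x) > 0. -/
/-
If `q(x, ·)` is linear in the features, with coefficient vector `φ_x`, then `φ_x` itself solves
the normal equations `Γ φ = θ`. Hence the difference `e = φ_x - φ*` lies in the kernel of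
`Γ = Σ_a π0(a|x) I_a I_aᵀ`, so `0 = eᵀ Γ e = Σ_a π0(a|x) ⟨I_a, e⟩²`, a sum of nonnegative terms;
every action of positive probability therefore has `⟨I_a, e⟩ = 0`.
-/

open Matrix BigOperators Finset

noncomputable section

/-- The combination of the first `s` coordinates of an action. -/
def combo {d s : ℕ} {F : Fin d → Type} (hsd : s ≤ d) (a : ∀ l, F l) :
    ∀ j : Fin s, F (Fin.castLE hsd j) :=
  fun j => a (Fin.castLE hsd j)

/-- The index set of the one-hot embedding: one coordinate for each value of each feature
dimension, plus one coordinate for each combination of the first `s` dimensions. -/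
abbrev FeatIdx {d : ℕ} (F : Fin d → Type) {s : ℕ} (hsd : s ≤ d) : Type _ :=
  (Σ l : Fin d, F l) ⊕ (∀ j : Fin s, F (Fin.castLE hsd j))

/-- The one-hot embedding `I_a`: concatenation of the one-hot indicators of
`f_1(a), …, f_d(a)` and of `f_{1:s}(a)`. -/
def oneHot {d s : ℕ} {F : Fin d → Type} [∀ l, DecidableEq (F l)] (hsd : s ≤ d)
    (a : ∀ l, F l) : FeatIdx F hsd → ℝ :=
  fun i =>
    match i with
    | Sum.inl ⟨l, f⟩ => if a l = f then 1 else 0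
    | Sum.inr c => if combo hsd a = c then 1 else 0

section
variable {ι n R : Type*} [Fintype ι] [Fintype n]

theorem Matrix.sum_smul_vecMulVec_self_mulVec [CommSemiring R] (w : ι → R) (v : ι → n → R)
    (φ : n → R) :
    (∑ a, w a • vecMulVec (v a) (v a)) *ᵥ φ = ∑ a, (w a * (v a ⬝ᵥ φ)) • v a := by
  simp only [sum_mulVec, smul_mulVec, vecMulVec_mulVec, op_smul_eq_smul, smul_smul]

theorem Matrix.dotProduct_sum_smul_vecMulVec_self_mulVec [CommSemiring R] (w : ι → R)
    (v : ι → n → R) (φ : n → R) :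
    φ ⬝ᵥ ((∑ a, w a • vecMulVec (v a) (v a)) *ᵥ φ) = ∑ a, w a * (v a ⬝ᵥ φ) ^ 2 := by
  rw [sum_smul_vecMulVec_self_mulVec, dotProduct_sum]
  refine sum_congr rfl fun a _ => ?_
  rw [dotProduct_smul, smul_eq_mul, dotProduct_comm, sq, mul_assoc]

variable [CommRing R] [LinearOrder R] [IsStrictOrderedRing R]

theorem Matrix.dotProduct_eq_zero_of_sum_smul_vecMulVec_self_mulVec_eq_zero {w : ι → R}
    (hw : ∀ a, 0 ≤ w a) (v : ι → n → R) {e : n → R}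
    (he : (∑ a, w a • vecMulVec (v a) (v a)) *ᵥ e = 0) {a : ι} (ha : 0 < w a) :
    v a ⬝ᵥ e = 0 := by
  have hquad := dotProduct_sum_smul_vecMulVec_self_mulVec w v e
  rw [he, dotProduct_zero, eq_comm,
    sum_eq_zero_iff_of_nonneg fun b _ => mul_nonneg (hw b) (sq_nonneg _)] at hquad
  simpa [ha.ne'] using hquad a (mem_univ a)

theorem Matrix.dotProduct_eq_of_normal_equations {w : ι → R} (hw : ∀ a, 0 ≤ w a)
    (v : ι → n → R) (φ φ' : n → R)
    (h : (∑ a, w a • vecMulVec (v a) (v a)) *ᵥ φ' = ∑ a, (w a * (v a ⬝ᵥ φ)) • v a)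
    {a : ι} (ha : 0 < w a) : v a ⬝ᵥ φ = v a ⬝ᵥ φ' := by
  rw [← sub_eq_zero, ← dotProduct_sub]
  refine dotProduct_eq_zero_of_sum_smul_vecMulVec_self_mulVec_eq_zero hw v ?_ ha
  rw [mulVec_sub, h, sum_smul_vecMulVec_self_mulVec, sub_self]
end

theorem identification_on_support_general {X : Type*}
    {d s : ℕ} (hsd : s ≤ d)
    {F : Fin d → Type} [∀ l, Fintype (F l)] [∀ l, DecidableEq (F l)]
    (π0 : X → (∀ l, F l) → ℝ)
    (hπ0 : ∀ x, (∀ a, 0 ≤ π0 x a) ∧ ∑ a, π0 x a = 1)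
    (q : X → (∀ l, F l) → ℝ) (x : X)
    (Γ : Matrix (FeatIdx F hsd) (FeatIdx F hsd) ℝ)
    (hΓ : Γ = ∑ a, π0 x a • vecMulVec (oneHot hsd a) (oneHot hsd a))
    (θ : FeatIdx F hsd → ℝ)
    (hθ : θ = ∑ a, (π0 x a * q x a) • oneHot hsd a)
    (hlin : ∃ φx : FeatIdx F hsd → ℝ, ∀ a, q x a = oneHot hsd a ⬝ᵥ φx)
    (φst : FeatIdx F hsd → ℝ) (hφst : Γ.mulVec φst = θ) :
    ∀ a, 0 < π0 x a → q x a = oneHot hsd a ⬝ᵥ φst := by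
  intro a ha
  obtain ⟨φx, hφx⟩ := hlin
  subst hΓ
  have hnormal : (∑ b, π0 x b • vecMulVec (oneHot hsd b) (oneHot hsd b)) *ᵥ φst =
      ∑ b, (π0 x b * (oneHot hsd b ⬝ᵥ φx)) • oneHot hsd b := by
    simp only [hφst, hθ, hφx]
  rw [hφx a]
  exact dotProduct_eq_of_normal_equations (hπ0 x).1 _ φx φst hnormal ha

/-- under Local Linearity at `x`, any `φ*` with `Γ_{π0,x} φ* = θ_{π0,x}`
recovers `q(x,a) = ⟨I_a, φ*⟩` for every action in the support of `π0(·|x)`. -/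
theorem identification_on_support {X : Type*} [Fintype X] [Nonempty X]
    {d s : ℕ} (hd : 1 ≤ d) (hs1 : 1 ≤ s) (hsd : s ≤ d)
    {F : Fin d → Type} [∀ l, Fintype (F l)] [∀ l, DecidableEq (F l)] [∀ l, Nonempty (F l)]
    (π0 : X → (∀ l, F l) → ℝ)
    (hπ0 : ∀ x, (∀ a, 0 ≤ π0 x a) ∧ ∑ a, π0 x a = 1)
    (q : X → (∀ l, F l) → ℝ) (x : X)
    (Γ : Matrix (FeatIdx F hsd) (FeatIdx F hsd) ℝ)
    (hΓ : Γ = ∑ a, π0 x a • vecMulVec (oneHot hsd a) (oneHot hsd a))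
    (θ : FeatIdx F hsd → ℝ)
    (hθ : θ = ∑ a, (π0 x a * q x a) • oneHot hsd a)
    (hlin : ∃ φx : FeatIdx F hsd → ℝ, ∀ a, q x a = oneHot hsd a ⬝ᵥ φx)
    (φst : FeatIdx F hsd → ℝ) (hφst : Γ.mulVec φst = θ) :
    ∀ a, 0 < π0 x a → q x a = oneHot hsd a ⬝ᵥ φst :=
  identification_on_support_general hsd π0 hπ0 q x Γ hΓ θ hθ hlin φst hφst
end
end

section
/- Fix a context x. Assume Local Linearity holds at x (there exists φ_x ∈ ℝ^K with q(x,a) = ⟨I_a, φ_x⟩ for all a ∈ A). Let φ* ∈ ℝ^K be any vector satisfying Γ_{π0,x} φ* = θ_{π0,x}. Then for every action a ∈ A such that I_a is orthogonal to the kernel of Γ_{π0,x}, one has q(x,a) = ⟨I_a, φ*⟩ — even if π0(a|x) = 0, i.e., even for actions never chosen by the logging policy at x. -/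
/-!
Under local linearity `q(x,·) = ⟨I_·, φₓ⟩`, the true parameter `φₓ` itself solves the normal
equations `Γ φ = θ`. So any other solution `φ*` differs from `φₓ` by an element of `ker Γ`, and an
embedding `I_a` orthogonal to `ker Γ` cannot tell the two apart.
-/

open Matrix BigOperators Finset

noncomputable section

namespace Matrix

variable {ι n R : Type*} [Fintype ι] [Fintype n] [CommRing R]

theorem sum_smul_vecMulVec_self_mulVec_s5 (w : ι → R) (v : ι → n → R) (φ : n → R) :
    (∑ a, w a • vecMulVec (v a) (v a)) *ᵥ φ = ∑ a, (w a * (v a ⬝ᵥ φ)) • v a := by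
  simp only [sum_mulVec, smul_mulVec, vecMulVec_mulVec, op_smul_eq_smul, smul_smul]

theorem dotProduct_eq_of_mulVec_eq_of_orthogonal_ker {Γ : Matrix n n R} {φ ψ u : n → R}
    (hu : ∀ z, Γ *ᵥ z = 0 → u ⬝ᵥ z = 0) (h : Γ *ᵥ φ = Γ *ᵥ ψ) : u ⬝ᵥ φ = u ⬝ᵥ ψ := by
  have hker : Γ *ᵥ (φ - ψ) = 0 := by rw [mulVec_sub, h, sub_self]
  simpa [dotProduct_sub, sub_eq_zero] using hu _ hker

end Matrix

theorem identification_beyond_support_general {X : Type*}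
    {d s : ℕ} (hsd : s ≤ d)
    {F : Fin d → Type} [∀ l, Fintype (F l)] [∀ l, DecidableEq (F l)]
    (π0 : X → (∀ l, F l) → ℝ)
    (q : X → (∀ l, F l) → ℝ) (x : X)
    (Γ : Matrix (FeatIdx F hsd) (FeatIdx F hsd) ℝ)
    (hΓ : Γ = ∑ a, π0 x a • vecMulVec (oneHot hsd a) (oneHot hsd a))
    (θ : FeatIdx F hsd → ℝ)
    (hθ : θ = ∑ a, (π0 x a * q x a) • oneHot hsd a)
    (hlin : ∃ φx : FeatIdx F hsd → ℝ, ∀ a, q x a = oneHot hsd a ⬝ᵥ φx)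
    (φst : FeatIdx F hsd → ℝ) (hφst : Γ.mulVec φst = θ) :
    ∀ a : ∀ l, F l,
      (∀ u : FeatIdx F hsd → ℝ, Γ.mulVec u = 0 → oneHot hsd a ⬝ᵥ u = 0) →
      q x a = oneHot hsd a ⬝ᵥ φst := by
  intro a ha
  obtain ⟨φx, hφx⟩ := hlin
  have hΓφx : Γ *ᵥ φx = θ := by
    simp only [hΓ, hθ, sum_smul_vecMulVec_self_mulVec_s5, hφx]
  rw [hφx a]
  exact dotProduct_eq_of_mulVec_eq_of_orthogonal_ker ha (hΓφx.trans hφst.symm)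

/-- under Local Linearity at `x`, any `φ*` with `Γ_{π0,x} φ* = θ_{π0,x}`
recovers `q(x,a) = ⟨I_a, φ*⟩` for every action `a` whose embedding `I_a` is orthogonal
to the kernel of `Γ_{π0,x}` — even if `π0(a|x) = 0`. -/
theorem identification_beyond_support {X : Type*} [Fintype X] [Nonempty X]
    {d s : ℕ} (hd : 1 ≤ d) (hs1 : 1 ≤ s) (hsd : s ≤ d)
    {F : Fin d → Type} [∀ l, Fintype (F l)] [∀ l, DecidableEq (F l)] [∀ l, Nonempty (F l)]
    (π0 : X → (∀ l, F l) → ℝ)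
    (hπ0 : ∀ x, (∀ a, 0 ≤ π0 x a) ∧ ∑ a, π0 x a = 1)
    (q : X → (∀ l, F l) → ℝ) (x : X)
    (Γ : Matrix (FeatIdx F hsd) (FeatIdx F hsd) ℝ)
    (hΓ : Γ = ∑ a, π0 x a • vecMulVec (oneHot hsd a) (oneHot hsd a))
    (θ : FeatIdx F hsd → ℝ)
    (hθ : θ = ∑ a, (π0 x a * q x a) • oneHot hsd a)
    (hlin : ∃ φx : FeatIdx F hsd → ℝ, ∀ a, q x a = oneHot hsd a ⬝ᵥ φx)
    (φst : FeatIdx F hsd → ℝ) (hφst : Γ.mulVec φst = θ) :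
    ∀ a : ∀ l, F l,
      (∀ u : FeatIdx F hsd → ℝ, Γ.mulVec u = 0 → oneHot hsd a ⬝ᵥ u = 0) →
      q x a = oneHot hsd a ⬝ᵥ φst :=
  identification_beyond_support_general hsd π0 q x Γ hΓ θ hθ hlin φst hφst
end
end

section
/- (Unbiasedness of the DR policy-gradient estimator under Full Support.) Let π0 (logging) and π (target) be policies with π0(a|x) > 0 for all x ∈ X and a ∈ A (Full Support), let q̂ : X × A → ℝ be an arbitrary reward model, let P ≥ 1 and let g : X × A → ℝ^P be arbitrary. Then Σ_{x∈X} p(x) [ Σ_{a∈A} π0(a|x) · (π(a|x)/π0(a|x)) · (q(x,a) − q̂(x,a)) · g(x,a) + Σ_{a∈A} π(a|x) · q̂(x,a) · g(x,a) ] = Σ_{x∈X} p(x) Σ_{a∈A} π(a|x) q(x,a) g(x,a); i.e., the expected value of the single-sample Doubly Robust policy-gradient estimator equals the true policy gradient for every choice of q̂. -/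
open BigOperators

/- Since `π0 x a ≠ 0`, the importance weight cancels the logging probability, so the
correction term contributes `π (q - q̂)` and the model term `π q̂` exactly compensates it,
pointwise in `(x, a)`: the choice of `q̂` drops out. -/

theorem mul_div_mul_sub_add_mul_eq {𝕜 : Type*} [Field 𝕜] {w v r r' : 𝕜} (hw : w ≠ 0) :
    w * (v / w) * (r - r') + v * r' = v * r := by
  rw [mul_div_cancel₀ v hw]
  ring

theorem sum_doublyRobust_smul_eq {𝕜 A E : Type*} [Field 𝕜] [Fintype A] [AddCommGroup E]
    [Module 𝕜 E] {π0 π q qhat : A → 𝕜} (hπ0 : ∀ a, π0 a ≠ 0) (g : A → E) :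
    ∑ a, (π0 a * (π a / π0 a) * (q a - qhat a)) • g a + ∑ a, (π a * qhat a) • g a
      = ∑ a, (π a * q a) • g a := by
  rw [← Finset.sum_add_distrib]
  refine Finset.sum_congr rfl fun a _ => ?_
  rw [← add_smul, mul_div_mul_sub_add_mul_eq (hπ0 a)]

theorem dr_unbiased_general {X A : Type*} [Fintype X] [Fintype A]
    {P : ℕ}
    (p : X → ℝ)
    (π0 π : X → A → ℝ)
    (hfull : ∀ x a, 0 < π0 x a)
    (q qhat : X → A → ℝ) (g : X → A → Fin P → ℝ) :
    (∑ x, p x • ((∑ a, (π0 x a * (π x a / π0 x a) * (q x a - qhat x a)) • g x a)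
        + ∑ a, (π x a * qhat x a) • g x a))
      = ∑ x, ∑ a, (p x * (π x a * q x a)) • g x a := by
  refine Finset.sum_congr rfl fun x _ => ?_
  rw [sum_doublyRobust_smul_eq (fun a => (hfull x a).ne') (g x), Finset.smul_sum]
  simp_rw [mul_smul]

/-- Unbiasedness of the DR policy-gradient estimator under Full Support. -/
theorem dr_unbiased {X A : Type*} [Fintype X] [Nonempty X] [Fintype A] [Nonempty A]
    {P : ℕ} (hP : 1 ≤ P)
    (p : X → ℝ) (hp : (∀ x, 0 ≤ p x) ∧ ∑ x, p x = 1)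
    (π0 π : X → A → ℝ)
    (hπ0 : ∀ x, (∀ a, 0 ≤ π0 x a) ∧ ∑ a, π0 x a = 1)
    (hπ : ∀ x, (∀ a, 0 ≤ π x a) ∧ ∑ a, π x a = 1)
    (hfull : ∀ x a, 0 < π0 x a)
    (q qhat : X → A → ℝ) (g : X → A → Fin P → ℝ) :
    (∑ x, p x • ((∑ a, (π0 x a * (π x a / π0 x a) * (q x a - qhat x a)) • g x a)
        + ∑ a, (π x a * qhat x a) • g x a))
      = ∑ x, ∑ a, (p x * (π x a * q x a)) • g x a :=
  dr_unbiased_general p π0 π hfull q qhat g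
end
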